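/- arXiv:2004.08451 — 2 statements merged into one kernel-verified Lean document; each statement's English description precedes it below -/
import Mathlib

section
/- The partial derivative of log det(Q) with respect to the edge weight w_e equals the effective resistance r_e of edge e, where Q = L + (1/n)J and L = Σ_e w_e g_e g_eᵀ. -/
open Matrix BigOperators

/-- Edge vector g_e for edge e = (i,j): +1 at i, -1 at j. -/
noncomputable def edgeVec (n : ℕ) (i j : Fin n) : Fin n → ℝ :=
  fun k => (if k = i then (1:ℝ) else 0) - (if k = j then (1:ℝ) else 0)

/-- Combinatorial graph Laplacian L = Σ_{e∈E} w_e g_e g_eᵀ. -/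
noncomputable def glap (n : ℕ) (E : Finset (Fin n × Fin n)) (w : Fin n × Fin n → ℝ) :
    Matrix (Fin n) (Fin n) ℝ :=
  ∑ e ∈ E, w e • Matrix.vecMulVec (edgeVec n e.1 e.2) (edgeVec n e.1 e.2)

/-- The all-ones n×n matrix J. -/
noncomputable def ones (n : ℕ) : Matrix (Fin n) (Fin n) ℝ := Matrix.of fun _ _ => (1:ℝ)

/-- Strengthened Laplacian Q = L + (1/n) J. -/
noncomputable def sLap (n : ℕ) (E : Finset (Fin n × Fin n)) (w : Fin n × Fin n → ℝ) :
    Matrix (Fin n) (Fin n) ℝ := glap n E w + (n : ℝ)⁻¹ • ones n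

/-- The simple graph on Fin n with (undirected) edges given by the pairs in E. -/
def graphOf (n : ℕ) (E : Finset (Fin n × Fin n)) : SimpleGraph (Fin n) :=
  SimpleGraph.fromEdgeSet ↑(E.image fun e => s(e.1, e.2))

/-- T is a spanning tree: its graph is connected and it has n-1 edges. -/
def IsSpanningTree (n : ℕ) (T : Finset (Fin n × Fin n)) : Prop :=
  (graphOf n T).Connected ∧ T.card = n - 1

open scoped Classical in
/-- Ω(L(w)) : the total weight of spanning trees, Σ_{spanning T ⊆ E} Π_{e∈T} w_e. -/
noncomputable def treeWeightSum (n : ℕ) (E : Finset (Fin n × Fin n))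
    (w : Fin n × Fin n → ℝ) : ℝ :=
  ∑ T ∈ E.powerset.filter (IsSpanningTree n), ∏ e ∈ T, w e

/-- B is the Moore–Penrose pseudoinverse of A. -/
def IsMoorePenrose {n : ℕ} (A B : Matrix (Fin n) (Fin n) ℝ) : Prop :=
  A * B * A = A ∧ B * A * B = B ∧ (A * B)ᵀ = A * B ∧ (B * A)ᵀ = B * A

/-!
Moving the weight of `e` from `w e` to `w e + t` is the rank-one perturbation
`Q ↦ Q + t g_e g_eᵀ`, so by the matrix determinant lemma
`det Q(w + t δ_e) = det Q · (1 + t g_eᵀ Q⁻¹ g_e)`, whose logarithmic derivative at `t = 0`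
is `g_eᵀ Q⁻¹ g_e`.
-/

namespace Matrix

variable {m α : Type*} [Fintype m] [DecidableEq m] [CommRing α]

theorem det_add_vecMulVec {A : Matrix m m α} (hA : IsUnit A.det) (u v : m → α) :
    (A + vecMulVec u v).det = A.det * (1 + v ⬝ᵥ (A⁻¹ *ᵥ u)) := by
  have hfactor : A + vecMulVec u v = A * (1 + vecMulVec (A⁻¹ *ᵥ u) v) := by
    rw [mul_add, mul_one, mul_vecMulVec, mulVec_mulVec, mul_nonsing_inv A hA, one_mulVec]
  rw [hfactor, det_mul, vecMulVec_eq Unit, det_one_add_replicateCol_mul_replicateRow]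

end Matrix

theorem hasDerivAt_log_det_add_smul_vecMulVec {m : Type*} [Fintype m] [DecidableEq m]
    {A : Matrix m m ℝ} (hA : A.det ≠ 0) (u v : m → ℝ) :
    HasDerivAt (fun t : ℝ => Real.log (A + t • vecMulVec u v).det) (v ⬝ᵥ (A⁻¹ *ᵥ u)) 0 := by
  set r := v ⬝ᵥ (A⁻¹ *ᵥ u)
  have hdet : ∀ t : ℝ, (A + t • vecMulVec u v).det = A.det * (1 + t * r) := fun t => by
    rw [← smul_vecMulVec, det_add_vecMulVec (isUnit_iff_ne_zero.mpr hA), mulVec_smul,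
      dotProduct_smul, smul_eq_mul]
  have hlin : HasDerivAt (fun t : ℝ => A.det * (1 + t * r)) (A.det * r) 0 := by
    simpa using (((hasDerivAt_id (0 : ℝ)).mul_const r).const_add 1).const_mul A.det
  simp_rw [hdet]
  convert hlin.log (by simpa using hA) using 1
  simp [hA]

theorem sLap_update {n : ℕ} {E : Finset (Fin n × Fin n)} (w : Fin n × Fin n → ℝ)
    {e : Fin n × Fin n} (he : e ∈ E) (s : ℝ) :
    sLap n E (Function.update w e s) =
      sLap n E w + (s - w e) • vecMulVec (edgeVec n e.1 e.2) (edgeVec n e.1 e.2) := by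
  simp only [sLap, glap, ← Finset.sum_erase_add E _ he, Function.update_self]
  rw [Finset.sum_congr rfl fun x hx => by rw [Function.update_of_ne (Finset.ne_of_mem_erase hx)]]
  module

/-- ∂/∂w_e [log det Q(w)] = r_e = g_eᵀ Q(w)⁻¹ g_e. -/
theorem stmt5 {n : ℕ} (E : Finset (Fin n × Fin n))
    (w : Fin n × Fin n → ℝ) (e : Fin n × Fin n) (he : e ∈ E)
    (hQ : (sLap n E w).PosDef) :
    HasDerivAt
      (fun s : ℝ => Real.log ((sLap n E (Function.update w e s)).det))
      (edgeVec n e.1 e.2 ⬝ᵥ ((sLap n E w)⁻¹ *ᵥ edgeVec n e.1 e.2))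
      (w e) := by
  simp_rw [sLap_update w he]
  have h := hasDerivAt_log_det_add_smul_vecMulVec hQ.det_pos.ne'
    (edgeVec n e.1 e.2) (edgeVec n e.1 e.2)
  rw [← sub_self (w e)] at h
  exact h.comp_sub_const _ _
end

section
/- Effective resistance is a metric: on the vertex set of a connected weighted graph, the function d(i,j) = r_{ij} = (e_i - e_j)ᵀ L† (e_i - e_j) satisfies nonnegativity, d(i,j)=0 iff i=j, symmetry, and the triangle inequality r_{ik} ≤ r_{ij} + r_{jk}. -/
open Matrix BigOperators

lemma edgeVec_dot {n : ℕ} (i j : Fin n) (x : Fin n → ℝ) :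
    edgeVec n i j ⬝ᵥ x = x i - x j := by
  simp [edgeVec, dotProduct, sub_mul, ite_mul, Finset.sum_sub_distrib]


lemma dot_edgeVec {n : ℕ} (i j : Fin n) (x : Fin n → ℝ) :
    x ⬝ᵥ edgeVec n i j = x i - x j := by
  rw [dotProduct_comm]; exact edgeVec_dot i j x


lemma glap_mulVec {n : ℕ} (E : Finset (Fin n × Fin n)) (w : Fin n × Fin n → ℝ)
    (x : Fin n → ℝ) (v : Fin n) :
    (glap n E w *ᵥ x) v = ∑ e ∈ E, w e * (edgeVec n e.1 e.2 v * (x e.1 - x e.2)) := by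
  simp only [glap, mulVec, dotProduct, Matrix.sum_apply, Matrix.smul_apply,
    vecMulVec_apply, smul_eq_mul, Finset.sum_mul]
  rw [Finset.sum_comm]
  refine Finset.sum_congr rfl fun e _ => ?_
  rw [← edgeVec_dot e.1 e.2 x, dotProduct, Finset.mul_sum]
  rw [Finset.mul_sum]
  exact Finset.sum_congr rfl fun k _ => by ring


lemma glap_quad {n : ℕ} (E : Finset (Fin n × Fin n)) (w : Fin n × Fin n → ℝ)
    (x : Fin n → ℝ) :
    x ⬝ᵥ (glap n E w *ᵥ x) = ∑ e ∈ E, w e * (x e.1 - x e.2)^2 := by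
  simp only [dotProduct, glap_mulVec, Finset.mul_sum]
  rw [Finset.sum_comm]
  refine Finset.sum_congr rfl fun e _ => ?_
  have : ∀ k, x k * (w e * (edgeVec n e.1 e.2 k * (x e.1 - x e.2)))
      = w e * (x e.1 - x e.2) * (edgeVec n e.1 e.2 k * x k) := fun k => by ring
  simp_rw [this]
  rw [← Finset.mul_sum, ← dotProduct, edgeVec_dot]
  ring


lemma glap_symm {n : ℕ} (E : Finset (Fin n × Fin n)) (w : Fin n × Fin n → ℝ) :
    (glap n E w)ᵀ = glap n E w := by
  unfold glap
  rw [Matrix.transpose_sum]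
  refine Finset.sum_congr rfl fun e _ => ?_
  rw [Matrix.transpose_smul]
  congr 1
  ext a b
  simp [vecMulVec_apply, mul_comm]


lemma mp_unique {n : ℕ} (A B C : Matrix (Fin n) (Fin n) ℝ)
    (hB : IsMoorePenrose A B) (hC : IsMoorePenrose A C) : B = C := by
  obtain ⟨hB1, hB2, hB3, hB4⟩ := hB
  obtain ⟨hC1, hC2, hC3, hC4⟩ := hC
  have hAB : A * B = A * C := by
    have t2 : Aᵀ = Aᵀ * Cᵀ * Aᵀ := by
      conv_lhs => rw [← hC1]
      simp [Matrix.transpose_mul, Matrix.mul_assoc]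
    calc A * B = Bᵀ * Aᵀ := by rw [← Matrix.transpose_mul, hB3]
      _ = Bᵀ * (Aᵀ * Cᵀ * Aᵀ) := by rw [← t2]
      _ = (Bᵀ * Aᵀ) * (Cᵀ * Aᵀ) := by simp [Matrix.mul_assoc]
      _ = (A * B) * (Cᵀ * Aᵀ) := by rw [← Matrix.transpose_mul, hB3]
      _ = (A * B) * (A * C)ᵀ := by rw [Matrix.transpose_mul]
      _ = (A * B) * (A * C) := by rw [hC3]
      _ = (A * B * A) * C := by simp [Matrix.mul_assoc]
      _ = A * C := by rw [hB1]
  have hBA : B * A = C * A := by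
    have t2 : Aᵀ = Aᵀ * Bᵀ * Aᵀ := by
      conv_lhs => rw [← hB1]
      simp [Matrix.transpose_mul, Matrix.mul_assoc]
    calc B * A = B * (A * C * A) := by rw [hC1]
      _ = (B * A) * (C * A) := by simp [Matrix.mul_assoc]
      _ = (B * A)ᵀ * (C * A)ᵀ := by rw [hB4, hC4]
      _ = Aᵀ * Bᵀ * (Aᵀ * Cᵀ) := by simp [Matrix.transpose_mul, Matrix.mul_assoc]
      _ = (Aᵀ * Bᵀ * Aᵀ) * Cᵀ := by simp [Matrix.mul_assoc]
      _ = Aᵀ * Cᵀ := by rw [← t2]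
      _ = (C * A)ᵀ := (Matrix.transpose_mul _ _).symm
      _ = C * A := hC4
  calc B = B * A * B := hB2.symm
    _ = C * A * B := by rw [hBA]
    _ = C * (A * B) := by rw [Matrix.mul_assoc]
    _ = C * (A * C) := by rw [hAB]
    _ = C * A * C := by rw [Matrix.mul_assoc]
    _ = C := hC2

lemma Lp_symm {n : ℕ} (E : Finset (Fin n × Fin n)) (w : Fin n × Fin n → ℝ)
    (Lp : Matrix (Fin n) (Fin n) ℝ) (hmp : IsMoorePenrose (glap n E w) Lp) :
    Lpᵀ = Lp := by
  refine mp_unique (glap n E w) Lpᵀ Lp ?_ hmp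
  obtain ⟨h1, h2, h3, h4⟩ := hmp
  have hL := glap_symm E w
  constructor
  · calc glap n E w * Lpᵀ * glap n E w = (glap n E w)ᵀ * Lpᵀ * (glap n E w)ᵀ := by rw [hL]
    _ = ((glap n E w * Lp) * (glap n E w))ᵀ := by rw [Matrix.transpose_mul, Matrix.transpose_mul]; noncomm_ring
    _ = glap n E w := by rw [h1, hL]
  refine ⟨?_, ?_, ?_⟩
  · calc Lpᵀ * glap n E w * Lpᵀ = Lpᵀ * (glap n E w)ᵀ * Lpᵀ := by rw [hL]
    _ = ((Lp * glap n E w) * Lp)ᵀ := by rw [Matrix.transpose_mul, Matrix.transpose_mul]; noncomm_ring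
    _ = Lpᵀ := by rw [h2]
  · calc (glap n E w * Lpᵀ)ᵀ = Lp * (glap n E w)ᵀ := by
          rw [Matrix.transpose_mul, Matrix.transpose_transpose]
    _ = Lp * glap n E w := by rw [hL]
    _ = (Lp * glap n E w)ᵀ := h4.symm
    _ = (glap n E w)ᵀ * Lpᵀ := Matrix.transpose_mul _ _
    _ = glap n E w * Lpᵀ := by rw [hL]
  · calc (Lpᵀ * glap n E w)ᵀ = (glap n E w)ᵀ * Lp := by
          rw [Matrix.transpose_mul, Matrix.transpose_transpose]
    _ = glap n E w * Lp := by rw [hL]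
    _ = (glap n E w * Lp)ᵀ := h3.symm
    _ = Lpᵀ * (glap n E w)ᵀ := Matrix.transpose_mul _ _
    _ = Lpᵀ * glap n E w := by rw [hL]


lemma glap_one {n : ℕ} (E : Finset (Fin n × Fin n)) (w : Fin n × Fin n → ℝ) :
    glap n E w *ᵥ (fun _ => (1:ℝ)) = 0 := by
  funext v
  rw [glap_mulVec]
  simp


lemma walk_prop {V : Type*} {G : SimpleGraph V} {P : V → Prop}
    (h : ∀ a b, G.Adj a b → P a → P b) {u v : V} (p : G.Walk u v) (hu : P u) : P v := by
  induction p with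
  | nil => exact hu
  | cons h' _ ih => exact ih (h _ _ h' hu)


lemma adj_of {n : ℕ} {E : Finset (Fin n × Fin n)} {a b : Fin n}
    (h : (graphOf n E).Adj a b) :
    a ≠ b ∧ ∃ e ∈ E, (e.1 = a ∧ e.2 = b) ∨ (e.1 = b ∧ e.2 = a) := by
  rw [graphOf, SimpleGraph.fromEdgeSet_adj] at h
  obtain ⟨hm, hne⟩ := h
  refine ⟨hne, ?_⟩
  simp only [Finset.coe_image, Set.mem_image, Finset.mem_coe] at hm
  obtain ⟨e, he, heq⟩ := hm
  rw [Sym2.eq_iff] at heq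
  exact ⟨e, he, by tauto⟩


lemma ker_const {n : ℕ} {E : Finset (Fin n × Fin n)} {w : Fin n × Fin n → ℝ}
    (hw : ∀ e ∈ E, 0 < w e) (hconn : (graphOf n E).Connected)
    (x : Fin n → ℝ) (hx : glap n E w *ᵥ x = 0) : ∀ a b : Fin n, x a = x b := by
  have hq : ∑ e ∈ E, w e * (x e.1 - x e.2)^2 = 0 := by
    rw [← glap_quad, hx, dotProduct_zero]
  have hE : ∀ e ∈ E, x e.1 = x e.2 := by
    intro e he
    have h0 : w e * (x e.1 - x e.2)^2 = 0 := by
      exact (Finset.sum_eq_zero_iff_of_nonneg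
        (fun e he => mul_nonneg (hw e he).le (sq_nonneg _))).mp hq e he
    have := hw e he
    have h2 : (x e.1 - x e.2)^2 = 0 := by
      rcases mul_eq_zero.mp h0 with h | h
      · exact absurd h this.ne'
      · exact h
    have := pow_eq_zero_iff (n := 2) (by norm_num) |>.mp h2
    linarith
  intro a b
  have hreach := hconn.preconnected a b
  obtain ⟨p⟩ := hreach
  refine walk_prop (P := fun v => x a = x v) ?_ p rfl
  intro u v huv hu
  obtain ⟨hne, e, he, hor⟩ := adj_of huv
  have := hE e he
  rcases hor with ⟨h1, h2⟩ | ⟨h1, h2⟩ <;> rw [hu] <;> rw [h1, h2] at this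
  · exact this
  · exact this.symm


lemma comm_LLp {n : ℕ} {E : Finset (Fin n × Fin n)} {w : Fin n × Fin n → ℝ}
    {Lp : Matrix (Fin n) (Fin n) ℝ} (hmp : IsMoorePenrose (glap n E w) Lp) :
    glap n E w * Lp = Lp * glap n E w := by
  have hL := glap_symm E w
  have hs := Lp_symm E w Lp hmp
  calc glap n E w * Lp = (glap n E w * Lp)ᵀ := hmp.2.2.1.symm
    _ = Lpᵀ * (glap n E w)ᵀ := Matrix.transpose_mul _ _
    _ = Lp * glap n E w := by rw [hL, hs]


lemma proj_eq {n : ℕ} {E : Finset (Fin n × Fin n)} {w : Fin n × Fin n → ℝ}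
    (hw : ∀ e ∈ E, 0 < w e) (hconn : (graphOf n E).Connected)
    {Lp : Matrix (Fin n) (Fin n) ℝ} (hmp : IsMoorePenrose (glap n E w) Lp)
    (x : Fin n → ℝ) (hx : ∑ v, x v = 0) :
    glap n E w *ᵥ (Lp *ᵥ x) = x := by
  set L := glap n E w with hLdef
  have hker : L *ᵥ (x - (Lp * L) *ᵥ x) = 0 := by
    rw [Matrix.mulVec_sub, Matrix.mulVec_mulVec, ← Matrix.mul_assoc, hmp.1]
    simp
  have hconst := ker_const hw hconn _ hker
  have hsum0 : ∑ v, ((Lp * L) *ᵥ x) v = 0 := by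
    have h1 : ∑ v, ((Lp * L) *ᵥ x) v = (fun _ => (1:ℝ)) ⬝ᵥ ((Lp * L) *ᵥ x) := by
      simp [dotProduct]
    rw [h1, dotProduct_mulVec]
    have h2 : (fun _ => (1:ℝ)) ᵥ* (Lp * L) = (Lp * L) *ᵥ (fun _ => (1:ℝ)) := by
      conv_lhs => rw [← hmp.2.2.2]
      rw [Matrix.vecMul_transpose]
    rw [h2, ← Matrix.mulVec_mulVec, glap_one, Matrix.mulVec_zero, zero_dotProduct]
  have hdsum : ∑ v, (x - (Lp * L) *ᵥ x) v = 0 := by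
    simp only [Pi.sub_apply, Finset.sum_sub_distrib, hx, hsum0, sub_zero]
  have hn : 0 < n := by
    have := hconn.nonempty
    rcases this with ⟨v⟩
    exact v.pos
  have hzero : ∀ a, (x - (Lp * L) *ᵥ x) a = 0 := by
    intro a
    have : ∑ v : Fin n, (x - (Lp * L) *ᵥ x) v = ∑ _v : Fin n, (x - (Lp * L) *ᵥ x) a :=
      Finset.sum_congr rfl fun v _ => hconst v a
    rw [hdsum, Finset.sum_const, Finset.card_univ, Fintype.card_fin,
      nsmul_eq_mul] at this
    have hne : (n : ℝ) ≠ 0 := Nat.cast_ne_zero.mpr hn.ne'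
    exact (mul_eq_zero.mp this.symm).resolve_left hne
  have hfix : (Lp * L) *ᵥ x = x := by
    funext a
    have := hzero a
    simp only [Pi.sub_apply] at this
    linarith
  rw [Matrix.mulVec_mulVec, comm_LLp hmp, hfix]


lemma edgeVec_sum {n : ℕ} (i j : Fin n) : ∑ v, edgeVec n i j v = 0 := by
  simp [edgeVec, Finset.sum_sub_distrib]


lemma min_principle {n : ℕ} {E : Finset (Fin n × Fin n)} {w : Fin n × Fin n → ℝ}
    (hw : ∀ e ∈ E, 0 < w e) (hconn : (graphOf n E).Connected)
    {Lp : Matrix (Fin n) (Fin n) ℝ} (hmp : IsMoorePenrose (glap n E w) Lp)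
    (i j : Fin n) :
    ∀ v, (Lp *ᵥ edgeVec n i j) j ≤ (Lp *ᵥ edgeVec n i j) v := by
  set ψ := Lp *ᵥ edgeVec n i j with hψ
  have hLψ : glap n E w *ᵥ ψ = edgeVec n i j := proj_eq hw hconn hmp _ (edgeVec_sum i j)
  obtain ⟨v₀, -, hv₀⟩ := Finset.exists_min_image Finset.univ ψ ⟨j, Finset.mem_univ j⟩
  have hmin : ∀ v, ψ v₀ ≤ ψ v := fun v => hv₀ v (Finset.mem_univ v)
  have hlocal : ∀ v, (∀ u, ψ v ≤ ψ u) → v ≠ j →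
      ∀ e ∈ E, (e.1 = v ∨ e.2 = v) → ψ e.1 = ψ e.2 := by
    intro v hv hvj e he hve
    have hpos : 0 ≤ (glap n E w *ᵥ ψ) v := by
      rw [hLψ]
      simp only [edgeVec, if_neg hvj, sub_zero]
      split <;> norm_num
    have hterms : ∀ e ∈ E, w e * (edgeVec n e.1 e.2 v * (ψ e.1 - ψ e.2)) ≤ 0 := by
      intro e' he'
      have hwe := (hw e' he').le
      have hval : w e' * (edgeVec n e'.1 e'.2 v * (ψ e'.1 - ψ e'.2))
          = w e' * (((if v = e'.1 then (1:ℝ) else 0) - (if v = e'.2 then 1 else 0))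
            * (ψ e'.1 - ψ e'.2)) := rfl
      rw [hval]
      by_cases h1 : v = e'.1 <;> by_cases h2 : v = e'.2
      · rw [if_pos h1, if_pos h2]; simp
      · rw [if_pos h1, if_neg h2, ← h1]; nlinarith [hv e'.2]
      · rw [if_neg h1, if_pos h2, ← h2]; nlinarith [hv e'.1]
      · rw [if_neg h1, if_neg h2]; simp
    have hsum0 : ∑ e ∈ E, w e * (edgeVec n e.1 e.2 v * (ψ e.1 - ψ e.2)) = 0 := by
      have hle : ∑ e ∈ E, w e * (edgeVec n e.1 e.2 v * (ψ e.1 - ψ e.2)) ≤ 0 :=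
        Finset.sum_nonpos hterms
      rw [← glap_mulVec] at hle ⊢
      linarith
    have hterm0 := (Finset.sum_eq_zero_iff_of_nonpos hterms).mp hsum0 e he
    have hwne := (hw e he).ne'
    have hg : edgeVec n e.1 e.2 v * (ψ e.1 - ψ e.2) = 0 :=
      (mul_eq_zero.mp hterm0).resolve_left hwne
    rcases hve with h1 | h2
    · by_cases h2 : e.2 = v
      · rw [h1, h2]
      · have : edgeVec n e.1 e.2 v = 1 := by
          have h2' : ¬ v = e.2 := fun h => h2 h.symm
          simp [edgeVec, h1, h2']
        rw [this, one_mul] at hg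
        linarith
    · by_cases h1 : e.1 = v
      · rw [h1, h2]
      · have : edgeVec n e.1 e.2 v = -1 := by
          have h1' : ¬ v = e.1 := fun h => h1 h.symm
          simp [edgeVec, h2, h1']
        rw [this] at hg
        have : ψ e.1 - ψ e.2 = 0 := by linarith [hg]
        linarith
  have hstep : ∀ a b, (graphOf n E).Adj a b →
      (ψ a ≤ ψ v₀ ∨ ψ j ≤ ψ v₀) → (ψ b ≤ ψ v₀ ∨ ψ j ≤ ψ v₀) := by
    intro a b hab hQa
    rcases hQa with ha | hj
    · rcases eq_or_ne a j with rfl | hne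
      · exact Or.inr ha
      · have hamin : ∀ u, ψ a ≤ ψ u := fun u => le_trans ha (hmin u)
        obtain ⟨hne', e, he, hor⟩ := adj_of hab
        have heq := hlocal a hamin hne e he (by tauto)
        left
        rcases hor with ⟨h1, h2⟩ | ⟨h1, h2⟩
        · rw [← h2, ← heq, h1]; exact ha
        · rw [← h1, heq, h2]; exact ha
    · exact Or.inr hj
  have hQ : ψ j ≤ ψ v₀ := by
    obtain ⟨p⟩ := hconn.preconnected v₀ j
    have := walk_prop hstep p (Or.inl le_rfl)
    tauto
  intro v
  exact le_trans hQ (hmin v)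


lemma Lp_vecMul {n : ℕ} {E : Finset (Fin n × Fin n)} {w : Fin n × Fin n → ℝ}
    {Lp : Matrix (Fin n) (Fin n) ℝ} (hmp : IsMoorePenrose (glap n E w) Lp)
    (x : Fin n → ℝ) : x ᵥ* Lp = Lp *ᵥ x := by
  conv_lhs => rw [← Lp_symm E w Lp hmp]
  exact Matrix.vecMul_transpose Lp x


lemma Lp_dot_symm {n : ℕ} {E : Finset (Fin n × Fin n)} {w : Fin n × Fin n → ℝ}
    {Lp : Matrix (Fin n) (Fin n) ℝ} (hmp : IsMoorePenrose (glap n E w) Lp)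
    (u v : Fin n → ℝ) : u ⬝ᵥ (Lp *ᵥ v) = v ⬝ᵥ (Lp *ᵥ u) := by
  rw [dotProduct_mulVec, Lp_vecMul hmp, dotProduct_comm]


lemma quad_eq {n : ℕ} {E : Finset (Fin n × Fin n)} {w : Fin n × Fin n → ℝ}
    {Lp : Matrix (Fin n) (Fin n) ℝ} (hmp : IsMoorePenrose (glap n E w) Lp)
    (x : Fin n → ℝ) :
    x ⬝ᵥ (Lp *ᵥ x) = (Lp *ᵥ x) ⬝ᵥ (glap n E w *ᵥ (Lp *ᵥ x)) := by
  conv_lhs => rw [← hmp.2.1]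
  rw [← Matrix.mulVec_mulVec, ← Matrix.mulVec_mulVec,
    dotProduct_mulVec, Lp_vecMul hmp]


lemma quad_zero_edges {n : ℕ} {E : Finset (Fin n × Fin n)} {w : Fin n × Fin n → ℝ}
    (hw : ∀ e ∈ E, 0 < w e) {x : Fin n → ℝ}
    (h : x ⬝ᵥ (glap n E w *ᵥ x) = 0) : ∀ e ∈ E, x e.1 = x e.2 := by
  rw [glap_quad] at h
  intro e he
  have h0 : w e * (x e.1 - x e.2)^2 = 0 :=
    (Finset.sum_eq_zero_iff_of_nonneg
      (fun e he => mul_nonneg (hw e he).le (sq_nonneg _))).mp h e he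
  have h2 : (x e.1 - x e.2)^2 = 0 := by
    rcases mul_eq_zero.mp h0 with h | h
    · exact absurd h (hw e he).ne'
    · exact h
  have := pow_eq_zero_iff (n := 2) (by norm_num) |>.mp h2
  linarith


/-- effective resistance d(i,j) = (e_i-e_j)ᵀL†(e_i-e_j)
is a metric on the vertices of a connected weighted graph. -/
theorem stmt15 {n : ℕ} (E : Finset (Fin n × Fin n))
    (w : Fin n × Fin n → ℝ) (hw : ∀ e ∈ E, 0 < w e)
    (hconn : (graphOf n E).Connected)
    (Lp : Matrix (Fin n) (Fin n) ℝ)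
    (hmp : IsMoorePenrose (glap n E w) Lp) :
    (∀ i j : Fin n, 0 ≤ edgeVec n i j ⬝ᵥ (Lp *ᵥ edgeVec n i j)) ∧
    (∀ i j : Fin n, edgeVec n i j ⬝ᵥ (Lp *ᵥ edgeVec n i j) = 0 ↔ i = j) ∧
    (∀ i j : Fin n, edgeVec n i j ⬝ᵥ (Lp *ᵥ edgeVec n i j)
        = edgeVec n j i ⬝ᵥ (Lp *ᵥ edgeVec n j i)) ∧
    (∀ i j k : Fin n, edgeVec n i k ⬝ᵥ (Lp *ᵥ edgeVec n i k)
        ≤ edgeVec n i j ⬝ᵥ (Lp *ᵥ edgeVec n i j)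
          + edgeVec n j k ⬝ᵥ (Lp *ᵥ edgeVec n j k)) := by
  refine ⟨?_, ?_, ?_, ?_⟩
  · intro i j
    rw [quad_eq hmp, glap_quad]
    exact Finset.sum_nonneg fun e he => mul_nonneg (hw e he).le (sq_nonneg _)
  · intro i j
    constructor
    · intro h
      rw [quad_eq hmp] at h
      have hE := quad_zero_edges hw h
      have hzero : glap n E w *ᵥ (Lp *ᵥ edgeVec n i j) = 0 := by
        funext v
        rw [glap_mulVec]
        refine Finset.sum_eq_zero fun e he => ?_
        rw [hE e he]
        ring
      have hproj := proj_eq hw hconn hmp (edgeVec n i j) (edgeVec_sum i j)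
      rw [hzero] at hproj
      have := congrFun hproj.symm i
      by_contra hne
      simp [edgeVec, hne] at this
    · rintro rfl
      have h0 : edgeVec n i i = 0 := by funext k; simp [edgeVec]
      rw [h0]
      simp
  · intro i j
    have hneg : edgeVec n j i = -edgeVec n i j := by
      funext k; simp [edgeVec]
    rw [hneg, Matrix.mulVec_neg, dotProduct_neg, neg_dotProduct, neg_neg]
  · intro i j k
    have hc : edgeVec n i k = edgeVec n i j + edgeVec n j k := by
      funext v; simp [edgeVec]
    set ψa := Lp *ᵥ edgeVec n i j with hψa
    set ψb := Lp *ᵥ edgeVec n j k with hψb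
    rw [hc, add_dotProduct]
    have ht1 : edgeVec n i j ⬝ᵥ (Lp *ᵥ (edgeVec n i j + edgeVec n j k))
        = ψa i - ψa k := by
      rw [Lp_dot_symm hmp, ← hc, edgeVec_dot]
    have ht2 : edgeVec n j k ⬝ᵥ (Lp *ᵥ (edgeVec n i j + edgeVec n j k))
        = ψb i - ψb k := by
      rw [Lp_dot_symm hmp, ← hc, edgeVec_dot]
    have hr1 : edgeVec n i j ⬝ᵥ (Lp *ᵥ edgeVec n i j) = ψa i - ψa j := by
      rw [edgeVec_dot]
    have hr2 : edgeVec n j k ⬝ᵥ (Lp *ᵥ edgeVec n j k) = ψb j - ψb k := by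
      rw [edgeVec_dot]
    have hmin1 : ψa j ≤ ψa k := min_principle hw hconn hmp i j k
    have hmin2 : ψb i ≤ ψb j := by
      have hneg : edgeVec n k j = -edgeVec n j k := by
        funext v; simp [edgeVec]
      have := min_principle hw hconn hmp k j i
      rw [hneg, Matrix.mulVec_neg] at this
      simpa using this
    rw [ht1, ht2, hr1, hr2]
    linarith
end
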